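/- Let X be a T₄ locally compact space with cellularity c(X) > ℵ₀. Then C₀(X) has the attaining c(X)-SSD2P: for every set M of norm-one regular Borel measures on X of cardinality < c(X), there exist functions B ⊂ S_{C₀(X)} which norm M and a function h ∈ S_{C₀(X)} such that f ± h ∈ S_{C₀(X)} for every f ∈ B. -/

import Mathlib

/-!
Among more than `|M| + ℵ₀` disjoint open cells, a bounded functional on `C₀(X)` can be
nonzero on functions supported in only countably many of them (disjointly supported unit
functions add up to a unit function), so some cell `U` is null for every `μ ∈ M`. Take a
bump `h` of norm one inside `U` and a cutoff `ψ ∈ [0, 1]` supported in `U` with `ψ = 1` on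
the support of `h`. Let `B` be the unit functions with support disjoint from that of `h`;
then `‖f ± h‖ = max ‖f‖ ‖h‖ = 1` for `f ∈ B`. If `‖f₀‖ ≤ 1` and `μ f₀ > r > 0`, then
`(1 - ψ) f₀` lies in the unit ball, has support disjoint from `h`, and has the same value
under `μ` because `ψ f₀` is supported in `U`; normalizing it gives an element of `B`.
-/

open Cardinal Metric Filter Topology NormedSpace
open scoped ENNReal
universe u
noncomputable section

/-- The cellularity of a topological space: the supremum of the cardinalities of families
of pairwise disjoint non-empty open sets, joined with `ℵ₀`. -/
def cellularity (X : Type u) [TopologicalSpace X] : Cardinal.{u} :=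
  (⨆ C : {C : Set (Set X) // (∀ U ∈ C, IsOpen U ∧ U.Nonempty) ∧ C.PairwiseDisjoint id},
    #(C.1)) ⊔ ℵ₀

open Function Set
open scoped ZeroAtInfty

namespace ZeroAtInftyContinuousMap

section Sum

variable {α β : Type*} [TopologicalSpace α] [AddCommMonoid β] [TopologicalSpace β]
  [ContinuousAdd β]

theorem coe_sum {ι : Type*} (s : Finset ι) (f : ι → C₀(α, β)) :
    ⇑(∑ i ∈ s, f i) = ∑ i ∈ s, ⇑(f i) :=
  map_sum (⟨⟨(⇑), coe_zero⟩, coe_add⟩ : C₀(α, β) →+ α → β) f s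

end Sum

variable {α β : Type*} [TopologicalSpace α] [SeminormedAddCommGroup β]

theorem norm_coe_le_norm (f : C₀(α, β)) (x : α) : ‖f x‖ ≤ ‖f‖ :=
  norm_toBCF_eq_norm (f := f) ▸ f.toBCF.norm_coe_le_norm x

theorem norm_le {f : C₀(α, β)} {C : ℝ} (hC : 0 ≤ C) : ‖f‖ ≤ C ↔ ∀ x, ‖f x‖ ≤ C :=
  norm_toBCF_eq_norm (f := f) ▸ f.toBCF.norm_le hC

theorem norm_add_eq_max_of_disjoint_support {f g : C₀(α, β)}
    (hfg : Disjoint (support f) (support g)) : ‖f + g‖ = max ‖f‖ ‖g‖ := by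
  have hpt : ∀ x, ‖(f + g) x‖ = max ‖f x‖ ‖g x‖ := fun x => by
    by_cases hfx : f x = 0
    · simp [hfx]
    · simp [notMem_support.1 (disjoint_left.1 hfg hfx)]
  refine le_antisymm ((norm_le (by positivity)).2 fun x => ?_) (max_le ?_ ?_)
  · exact (hpt x).trans_le (max_le_max (norm_coe_le_norm f x) (norm_coe_le_norm g x))
  · exact (norm_le (norm_nonneg _)).2 fun x =>
      (le_max_left _ _).trans ((hpt x).symm.le.trans (norm_coe_le_norm _ x))
  · exact (norm_le (norm_nonneg _)).2 fun x =>
      (le_max_right _ _).trans ((hpt x).symm.le.trans (norm_coe_le_norm _ x))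

theorem norm_sum_le_of_pairwise_disjoint_support {ι : Type*} {f : ι → C₀(α, β)}
    (hf : Pairwise (Disjoint on fun i => support (f i))) (s : Finset ι) {C : ℝ} (hC : 0 ≤ C)
    (hfC : ∀ i ∈ s, ‖f i‖ ≤ C) : ‖∑ i ∈ s, f i‖ ≤ C := by
  refine (norm_le hC).2 fun x => ?_
  rw [coe_sum, Finset.sum_apply]
  by_cases hx : ∃ i ∈ s, x ∈ support (f i)
  · obtain ⟨i, hi, hxi⟩ := hx
    rw [Finset.sum_eq_single_of_mem i hi fun j _ hji => ?_]
    · exact (norm_coe_le_norm _ x).trans (hfC i hi)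
    · by_contra hxj
      exact disjoint_left.1 (hf hji) hxj hxi
  · rw [Finset.sum_eq_zero fun i hi => notMem_support.1 fun hxi => hx ⟨i, hi, hxi⟩, norm_zero]
    exact hC

end ZeroAtInftyContinuousMap

namespace StrongDual

variable {E : Type*} [NormedAddCommGroup E] [NormedSpace ℝ E]

theorem exists_norm_le_one_lt_apply (μ : StrongDual ℝ E) {r : ℝ} (hr : r < ‖μ‖) :
    ∃ x, ‖x‖ ≤ 1 ∧ r < μ x := by
  obtain ⟨x, hx, hrx⟩ := ContinuousLinearMap.exists_lt_apply_of_lt_opNorm μ hr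
  rw [Real.norm_eq_abs] at hrx
  rcases lt_abs.1 hrx with h | h
  · exact ⟨x, hx.le, h⟩
  · exact ⟨-x, (norm_neg x).trans_le hx.le, by rwa [map_neg]⟩

theorem exists_smul_norm_le_one_pos (μ : StrongDual ℝ E) {x : E} (hx : μ x ≠ 0) :
    ∃ c : ℝ, ‖c • x‖ ≤ 1 ∧ 0 < μ (c • x) := by
  have hx₀ : 0 < ‖x‖ := norm_pos_iff.2 fun h => hx (by rw [h, map_zero])
  have hnorm : ∀ c : ℝ, |c| = ‖x‖⁻¹ → ‖c • x‖ ≤ 1 := fun c hc => by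
    rw [norm_smul, Real.norm_eq_abs, hc, inv_mul_cancel₀ hx₀.ne']
  rcases hx.lt_or_gt with hneg | hpos
  · refine ⟨-‖x‖⁻¹, hnorm _ (by simp), ?_⟩
    rw [map_smul, smul_eq_mul, neg_mul]
    exact neg_pos.2 (mul_neg_of_pos_of_neg (inv_pos.2 hx₀) hneg)
  · refine ⟨‖x‖⁻¹, hnorm _ (by simp), ?_⟩
    rw [map_smul, smul_eq_mul]
    exact mul_pos (inv_pos.2 hx₀) hpos

end StrongDual

section Cells

variable {X : Type u} [TopologicalSpace X]

/-- In terms of the Riesz–Markov measure of `μ`: `|μ|(U) = 0`. -/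
def VanishesOn (μ : StrongDual ℝ C₀(X, ℝ)) (U : Set X) : Prop :=
  ∀ g : C₀(X, ℝ), support g ⊆ U → μ g = 0

theorem countable_setOf_not_vanishesOn {𝒞 : Set (Set X)} (h𝒞 : 𝒞.PairwiseDisjoint id)
    (μ : StrongDual ℝ C₀(X, ℝ)) : {U ∈ 𝒞 | ¬VanishesOn μ U}.Countable := by
  set S := {U ∈ 𝒞 | ¬VanishesOn μ U}
  have hS : ∀ U : S, ∃ g : C₀(X, ℝ), support g ⊆ U ∧ ‖g‖ ≤ 1 ∧ 0 < μ g := by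
    rintro ⟨U, -, hU⟩
    obtain ⟨g, hgU, hg⟩ : ∃ g : C₀(X, ℝ), support g ⊆ U ∧ μ g ≠ 0 := by
      simpa [VanishesOn] using hU
    obtain ⟨c, hc1, hc⟩ := μ.exists_smul_norm_le_one_pos hg
    exact ⟨c • g, (support_const_smul_subset c g).trans hgU, hc1, hc⟩
  choose g hgU hg1 hgpos using hS
  have hdisj : Pairwise (Disjoint on fun U => support (g U)) := fun U V hUV =>
    (h𝒞 U.2.1 V.2.1 (Subtype.coe_injective.ne hUV)).mono (hgU U) (hgU V)
  have hsum : Summable fun U => μ (g U) := by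
    refine summable_of_sum_le (c := ‖μ‖) (fun U => (hgpos U).le) fun t => ?_
    calc ∑ U ∈ t, μ (g U) = μ (∑ U ∈ t, g U) := (map_sum μ g t).symm
      _ ≤ ‖μ‖ * ‖∑ U ∈ t, g U‖ := (le_abs_self _).trans (μ.le_opNorm _)
      _ ≤ ‖μ‖ * 1 := by
        gcongr
        exact ZeroAtInftyContinuousMap.norm_sum_le_of_pairwise_disjoint_support hdisj t
          zero_le_one fun U _ => hg1 U
      _ = ‖μ‖ := mul_one _
  have hsupp : support (fun U => μ (g U)) = Set.univ := Set.eq_univ_of_forall fun U => (hgpos U).ne'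
  rw [← countable_coe_iff, ← countable_univ_iff, ← hsupp]
  exact hsum.countable_support

theorem exists_mem_forall_vanishesOn {𝒞 : Set (Set X)} (h𝒞 : 𝒞.PairwiseDisjoint id)
    {M : Set (StrongDual ℝ C₀(X, ℝ))} (hM : #M < #𝒞) (h𝒞₀ : ℵ₀ < #𝒞) :
    ∃ U ∈ 𝒞, ∀ μ ∈ M, VanishesOn μ U := by
  by_contra! h
  have hsub : 𝒞 ⊆ ⋃ μ : M, {U ∈ 𝒞 | ¬VanishesOn μ U} := fun U hU => by
    obtain ⟨μ, hμ, hμU⟩ := h U hU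
    exact mem_iUnion.2 ⟨⟨μ, hμ⟩, hU, hμU⟩
  have hcount : ⨆ μ : M, #{U ∈ 𝒞 | ¬VanishesOn μ U} ≤ ℵ₀ :=
    ciSup_le' fun μ => (countable_setOf_not_vanishesOn h𝒞 μ).le_aleph0
  have := (mk_le_mk_of_subset hsub).trans ((mk_iUnion_le _).trans (mul_le_mul_right hcount _))
  exact this.not_gt (mul_lt_of_lt h𝒞₀.le hM h𝒞₀)

theorem exists_pairwiseDisjoint_lt_card_of_lt_cellularity {κ : Cardinal.{u}}
    (hκ : κ < cellularity X) (hκ₀ : ℵ₀ ≤ κ) :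
    ∃ 𝒞 : Set (Set X), (∀ U ∈ 𝒞, IsOpen U ∧ U.Nonempty) ∧ 𝒞.PairwiseDisjoint id ∧ κ < #𝒞 := by
  have hlt : κ < ⨆ C : {C : Set (Set X) // (∀ U ∈ C, IsOpen U ∧ U.Nonempty) ∧
      C.PairwiseDisjoint id}, #C.1 := by
    rcases lt_sup_iff.1 hκ with h | h
    exacts [h, absurd (hκ₀.trans_lt h) (lt_irrefl _)]
  have : Nonempty {C : Set (Set X) // (∀ U ∈ C, IsOpen U ∧ U.Nonempty) ∧
      C.PairwiseDisjoint id} := ⟨⟨∅, by simp, pairwiseDisjoint_empty⟩⟩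
  obtain ⟨⟨𝒞, h𝒞open, h𝒞disj⟩, h𝒞⟩ := exists_lt_of_lt_ciSup hlt
  exact ⟨𝒞, h𝒞open, h𝒞disj, h𝒞⟩

theorem exists_bump_and_cutoff [RegularSpace X] [LocallyCompactSpace X] {U : Set X}
    (hU : IsOpen U) (hU₀ : U.Nonempty) :
    ∃ h ψ : C₀(X, ℝ), ‖h‖ = 1 ∧ EqOn ψ 1 (support h) ∧ support ψ ⊆ U ∧
      ∀ x, ψ x ∈ Icc (0 : ℝ) 1 := by
  obtain ⟨x, hx⟩ := hU₀
  obtain ⟨K, hK, -, hxK, hKU⟩ :=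
    exists_compact_closed_between isCompact_singleton hU (singleton_subset_iff.2 hx)
  obtain ⟨h, hh1, hh0, hhc, hh01⟩ := exists_continuous_one_zero_of_isCompact isCompact_singleton
    isOpen_interior.isClosed_compl (disjoint_compl_right_iff_subset.2 hxK)
  obtain ⟨ψ, hψ1, hψ0, hψc, hψ01⟩ := exists_continuous_one_zero_of_isCompact hK
    hU.isClosed_compl (disjoint_compl_right_iff_subset.2 hKU)
  refine ⟨⟨h, hhc.is_zero_at_infty⟩, ⟨ψ, hψc.is_zero_at_infty⟩, ?_, ?_, ?_, hψ01⟩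
  · refine le_antisymm ((ZeroAtInftyContinuousMap.norm_le zero_le_one).2 fun y => ?_) ?_
    · change |h y| ≤ 1
      exact abs_le.2 ⟨by linarith [(hh01 y).1], (hh01 y).2⟩
    · have := ZeroAtInftyContinuousMap.norm_coe_le_norm (⟨h, hhc.is_zero_at_infty⟩ : C₀(X, ℝ)) x
      change ‖h x‖ ≤ _ at this
      rwa [hh1 rfl, Pi.one_apply, norm_one] at this
  · exact hψ1.mono fun y hy => interior_subset (not_not.1 fun hy' => hy (hh0 hy'))
  · exact support_subset_iff'.2 fun y hy => hψ0 hy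

theorem exists_norm_eq_one_disjoint_support_le_apply {U : Set X} {h ψ : C₀(X, ℝ)}
    (hψh : EqOn ψ 1 (support h)) (hψU : support ψ ⊆ U) (hψ01 : ∀ x, ψ x ∈ Icc (0 : ℝ) 1)
    {μ : StrongDual ℝ C₀(X, ℝ)} (hμU : VanishesOn μ U) {f₀ : C₀(X, ℝ)} (hf₀ : ‖f₀‖ ≤ 1)
    (hμf₀ : 0 < μ f₀) :
    ∃ f : C₀(X, ℝ), ‖f‖ = 1 ∧ Disjoint (support f) (support h) ∧ μ f₀ ≤ μ f := by
  set g := f₀ - ψ * f₀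
  have hμg : μ g = μ f₀ := by
    rw [map_sub, hμU (ψ * f₀) ((support_mul_subset_left _ _).trans hψU), sub_zero]
  have hgh : Disjoint (support g) (support h) := disjoint_right.2 fun x hx => by
    simp [g, hψh hx]
  have hg1 : ‖g‖ ≤ 1 := (ZeroAtInftyContinuousMap.norm_le zero_le_one).2 fun x => by
    have hψx := hψ01 x
    calc ‖g x‖ = |1 - ψ x| * ‖f₀ x‖ := by simp [g, ← one_sub_mul]
      _ ≤ 1 * 1 := by
        gcongr
        · exact abs_le.2 ⟨by linarith [hψx.2], by linarith [hψx.1]⟩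
        · exact (ZeroAtInftyContinuousMap.norm_coe_le_norm f₀ x).trans hf₀
      _ = 1 := one_mul 1
  have hg₀ : g ≠ 0 := fun hg => hμf₀.ne' (hμg ▸ hg ▸ map_zero μ)
  refine ⟨‖g‖⁻¹ • g, norm_smul_inv_norm hg₀, ?_, ?_⟩
  · rwa [ZeroAtInftyContinuousMap.coe_smul,
      support_const_smul_of_ne_zero _ _ (inv_ne_zero (norm_ne_zero_iff.2 hg₀))]
  · rw [map_smul, smul_eq_mul, hμg]
    exact le_mul_of_one_le_left hμf₀.le (one_le_inv₀ (norm_pos_iff.2 hg₀) |>.2 hg1)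

end Cells

/-- For a T₄ locally compact space `X` with uncountable cellularity, `C₀(X)` has the
attaining `c(X)`-SSD2P: every set `M` of norm-one functionals with `|M| < c(X)` admits
`B ⊆ S` norming `M` and `h ∈ S` with `B ± h ⊆ S`. -/
theorem C0_ASSD2P_of_cellularity (X : Type u) [TopologicalSpace X] [T4Space X]
    [LocallyCompactSpace X] (hc : ℵ₀ < cellularity X)
    (M : Set (StrongDual ℝ (ZeroAtInftyContinuousMap X ℝ)))
    (hM1 : ∀ μ ∈ M, ‖μ‖ = 1) (hMc : #M < cellularity X) :
    ∃ (B : Set (ZeroAtInftyContinuousMap X ℝ)) (h : ZeroAtInftyContinuousMap X ℝ),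
      B ⊆ sphere 0 1 ∧ h ∈ sphere (0 : ZeroAtInftyContinuousMap X ℝ) 1 ∧
      (∀ f ∈ B, f + h ∈ sphere (0 : ZeroAtInftyContinuousMap X ℝ) 1 ∧
        f - h ∈ sphere (0 : ZeroAtInftyContinuousMap X ℝ) 1) ∧
      ∀ μ ∈ M, ∀ r ∈ Set.Ioo (0 : ℝ) 1, ∃ f ∈ B, r ≤ μ f := by
  obtain ⟨𝒞, h𝒞open, h𝒞disj, h𝒞card⟩ :=
    exists_pairwiseDisjoint_lt_card_of_lt_cellularity (max_lt hMc hc) le_sup_right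
  obtain ⟨U, hU𝒞, hUM⟩ := exists_mem_forall_vanishesOn h𝒞disj
    (le_sup_left.trans_lt h𝒞card) (le_sup_right.trans_lt h𝒞card)
  obtain ⟨h, ψ, hh, hψh, hψU, hψ01⟩ := exists_bump_and_cutoff (h𝒞open U hU𝒞).1 (h𝒞open U hU𝒞).2
  refine ⟨{f | ‖f‖ = 1 ∧ Disjoint (support f) (support h)}, h,
    fun f hf => mem_sphere_zero_iff_norm.2 hf.1, mem_sphere_zero_iff_norm.2 hh, ?_, ?_⟩
  · rintro f ⟨hf, hfh⟩
    have hfh' : Disjoint (support f) (support ⇑(-h)) := by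
      rwa [ZeroAtInftyContinuousMap.coe_neg, support_neg]
    simp only [mem_sphere_zero_iff_norm, sub_eq_add_neg,
      ZeroAtInftyContinuousMap.norm_add_eq_max_of_disjoint_support hfh,
      ZeroAtInftyContinuousMap.norm_add_eq_max_of_disjoint_support hfh', norm_neg, hf, hh,
      max_self, and_self]
  · rintro μ hμ r ⟨hr0, hr1⟩
    obtain ⟨f₀, hf₀, hrf₀⟩ := μ.exists_norm_le_one_lt_apply (hr1.trans_eq (hM1 μ hμ).symm)
    obtain ⟨f, hf, hfh, hf₀f⟩ := exists_norm_eq_one_disjoint_support_le_apply hψh hψU hψ01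
      (hUM μ hμ) hf₀ (hr0.trans hrf₀)
    exact ⟨f, ⟨hf, hfh⟩, hrf₀.le.trans hf₀f⟩
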